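/- arXiv:2006.12489 — 4 statements merged into one kernel-verified Lean document; each statement's English description precedes it below -/
import Mathlib

section
/- Let Q : (0,∞) → (0,∞) be measurable such that g(t) := lim_{x→∞} Q(tx)/Q(x) exists, is finite and nonzero for all t > 0. Then there exists γ ∈ ℝ such that g(t) = t^γ for all t > 0. -/
open Filter Real

/-! Writing `f u = log g(eᵘ)`, multiplicativity of the limit `g` makes `f` additive, and `f` is
measurable as a pointwise limit of measurable functions. A measurable solution of Cauchy's equation
is linear, `f u = γ u`, which is `g t = t ^ γ`. -/

theorem AddMonoidHom.eq_mul_map_one_of_measurable (f : ℝ →+ ℝ) (hf : Measurable f) (x : ℝ) :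
    f x = x * f 1 := by
  simpa using
    map_real_smul f (MeasureTheory.Measure.AddMonoidHom.continuous_of_measurable f hf) x 1

theorem exists_rpow_eq_of_measurable_of_map_mul (φ : ℝ → ℝ)
    (hmeas : Measurable fun u => φ (exp u)) (hpos : ∀ t > 0, 0 < φ t)
    (hmul : ∀ s > 0, ∀ t > 0, φ (s * t) = φ s * φ t) :
    ∃ γ : ℝ, ∀ t > 0, φ t = t ^ γ := by
  let f : ℝ →+ ℝ := AddMonoidHom.mk' (fun u => log (φ (exp u))) fun u v => by
    simp only [exp_add, hmul _ (exp_pos u) _ (exp_pos v),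
      log_mul (hpos _ (exp_pos u)).ne' (hpos _ (exp_pos v)).ne']
  have hf : Measurable f := measurable_log.comp hmeas
  refine ⟨f 1, fun t ht => ?_⟩
  calc φ t = exp (f (log t)) := by simp [f, exp_log ht, exp_log (hpos t ht)]
    _ = t ^ f 1 := by rw [f.eq_mul_map_one_of_measurable hf, rpow_def_of_pos ht]

section RegularVariation

variable {Q : ℝ → ℝ}

theorem nonneg_of_tendsto_ratio (hQpos : ∀ x > 0, 0 < Q x) {t L : ℝ} (ht : 0 < t)
    (hL : Tendsto (fun x => Q (t * x) / Q x) atTop (nhds L)) : 0 ≤ L :=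
  ge_of_tendsto hL <| (eventually_gt_atTop 0).mono fun x hx =>
    div_nonneg (hQpos _ (mul_pos ht hx)).le (hQpos x hx).le

theorem tendsto_ratio_mul (hQpos : ∀ x > 0, 0 < Q x) {s t a b : ℝ} (ht : 0 < t)
    (ha : Tendsto (fun x => Q (s * x) / Q x) atTop (nhds a))
    (hb : Tendsto (fun x => Q (t * x) / Q x) atTop (nhds b)) :
    Tendsto (fun x => Q (s * t * x) / Q x) atTop (nhds (a * b)) := by
  have hsplit := (ha.comp (tendsto_id.const_mul_atTop ht)).mul hb
  refine hsplit.congr' <| (eventually_gt_atTop 0).mono fun x hx => ?_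
  have : Q (t * x) ≠ 0 := (hQpos _ (mul_pos ht hx)).ne'
  simp only [Function.comp_apply, id, mul_assoc]
  field_simp

theorem measurable_of_tendsto_ratio_exp (hQmeas : Measurable Q) {φ : ℝ → ℝ}
    (hφ : ∀ u, Tendsto (fun x => Q (exp u * x) / Q x) atTop (nhds (φ (exp u)))) :
    Measurable fun u => φ (exp u) :=
  measurable_of_tendsto_metrizable
    (fun n : ℕ => (hQmeas.comp (measurable_exp.mul_const (n : ℝ))).div_const (Q n))
    (tendsto_pi_nhds.2 fun u => (hφ u).comp tendsto_natCast_atTop_atTop)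

end RegularVariation

/-- Characterization theorem for regularly varying functions: if
`g(t) = lim_{x→∞} Q(tx)/Q(x)` exists, is finite and nonzero for all `t > 0`,
then `g(t) = t^γ` for some `γ ∈ ℝ`. -/
theorem regular_variation_characterization (Q g : ℝ → ℝ)
    (hQmeas : Measurable Q) (hQpos : ∀ x > 0, 0 < Q x)
    (hg : ∀ t > 0, g t ≠ 0 ∧
      Tendsto (fun x => Q (t * x) / Q x) atTop (nhds (g t))) :
    ∃ γ : ℝ, ∀ t > 0, g t = t ^ γ := by
  refine exists_rpow_eq_of_measurable_of_map_mul g ?_ (fun t ht => ?_) (fun s hs t ht => ?_)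
  · exact measurable_of_tendsto_ratio_exp hQmeas fun u => (hg _ (exp_pos u)).2
  · exact (nonneg_of_tendsto_ratio hQpos ht (hg t ht).2).lt_of_ne' (hg t ht).1
  · exact tendsto_nhds_unique (hg _ (mul_pos hs ht)).2
      (tendsto_ratio_mul hQpos ht (hg s hs).2 (hg t ht).2)
end

section
/- Let U₁, …, U_k be i.i.d. uniform random variables on [0,1]. Then for every λ ≥ 1, P( sup_{0 < s ≤ 1} (#{i ≤ k : U_i ≤ s}/k)/s ≥ λ ) = 1/λ. -/
/-!
Put `c = 1 / (k λ)`. For a sample in `(0,1]^k` the supremum of `F̂_k(s) / s` is attained at a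
sample point, and it is at least `λ` iff for some `1 ≤ j ≤ k` at least `j` sample points lie in
`[0, c j]`. The complementary event is the ballot-type set
`B_k(c) = {x | #{i | x i ≤ c j} < j for all 1 ≤ j ≤ k}`, so it suffices to show
`vol ([0,T]^k ∩ B_k(c)) = T^k - k c T^(k-1)` whenever `k c ≤ T`.

This goes by induction on `k`. Split `[0,T]^(k+1)` according to which coordinate is largest: ties
are null, and by symmetry each coordinate contributes equally. If the largest coordinate is `m`,
the point lies in `B_(k+1)(c)` iff `m > (k+1) c` and the other coordinates lie in
`[0,m]^k ∩ B_k(c)`, so the volume is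
`(k+1) ∫_{(k+1)c}^T (m^k - k c m^(k-1)) dm = T^(k+1) - (k+1) c T^k`.
-/

open MeasureTheory ProbabilityTheory Finset
open scoped ENNReal

section Count

variable {k : ℕ}

noncomputable def countLE (x : Fin k → ℝ) (a : ℝ) : ℕ := #{i | x i ≤ a}

lemma countLE_le (x : Fin k → ℝ) (a : ℝ) : countLE x a ≤ k :=
  (card_filter_le _ _).trans_eq (card_fin k)

lemma countLE_mono (x : Fin k → ℝ) {a b : ℝ} (hab : a ≤ b) : countLE x a ≤ countLE x b :=
  card_le_card <| monotone_filter_right _ fun _ _ h => h.trans hab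

lemma countLE_of_forall_le {x : Fin k → ℝ} {a : ℝ} (h : ∀ i, x i ≤ a) : countLE x a = k := by
  simp [countLE, h]

lemma countLE_comp_perm (x : Fin k → ℝ) (σ : Equiv.Perm (Fin k)) (a : ℝ) :
    countLE (x ∘ σ) a = countLE x a :=
  card_equiv σ (by simp)

lemma countLE_insertNth (i : Fin (k + 1)) (m : ℝ) (y : Fin k → ℝ) (a : ℝ) :
    countLE (i.insertNth m y) a = (if m ≤ a then 1 else 0) + countLE y a := by
  simp only [countLE, card_filter, Fin.sum_univ_succAbove _ i, Fin.insertNth_apply_same,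
    Fin.insertNth_apply_succAbove]

lemma measurable_countLE (a : ℝ) : Measurable fun x : Fin k → ℝ => countLE x a := by
  simp only [countLE, card_filter]
  exact Finset.measurable_sum _ fun i _ =>
    Measurable.ite (measurableSet_le (measurable_pi_apply i) measurable_const)
      measurable_const measurable_const

def ballotSet (k : ℕ) (c : ℝ) : Set (Fin k → ℝ) :=
  {x | ∀ j ∈ Finset.Icc 1 k, countLE x (c * j) < j}

lemma measurableSet_ballotSet (k : ℕ) (c : ℝ) : MeasurableSet (ballotSet k c) := by
  simp only [ballotSet, Set.ofPred_forall]
  exact .biInter (Set.to_countable _) fun j _ =>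
    measurableSet_lt (measurable_countLE _) measurable_const

lemma comp_perm_mem_Icc_inter_ballotSet (σ : Equiv.Perm (Fin k)) (T c : ℝ) (x : Fin k → ℝ) :
    x ∘ σ ∈ Set.Icc 0 (fun _ => T) ∩ ballotSet k c ↔
      x ∈ Set.Icc 0 (fun _ => T) ∩ ballotSet k c := by
  refine and_congr ?_ (by simp [ballotSet, countLE_comp_perm])
  simp only [Set.mem_Icc, Pi.le_def, Pi.zero_apply, Function.comp_apply]
  exact and_congr (σ.forall_congr_right (q := fun i => 0 ≤ x i))
    (σ.forall_congr_right (q := fun i => x i ≤ T))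

lemma insertNth_mem_ballotSet_iff {c m : ℝ} (hc : 0 ≤ c) {y : Fin k → ℝ} (hy : ∀ l, y l ≤ m)
    (i : Fin (k + 1)) :
    i.insertNth m y ∈ ballotSet (k + 1) c ↔ (k + 1) * c < m ∧ y ∈ ballotSet k c := by
  simp only [ballotSet, Set.mem_ofPred_eq, countLE_insertNth]
  constructor
  · intro h
    have hm : (k + 1) * c < m := by
      by_contra! hm
      have hlast := h (k + 1) (by simp)
      push_cast at hlast
      rw [if_pos (by linarith), countLE_of_forall_le fun l => (hy l).trans (by linarith)] at hlast
      omega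
    refine ⟨hm, fun j hj => ?_⟩
    have := h j (Icc_subset_Icc_right k.le_succ hj)
    split_ifs at this <;> omega
  · rintro ⟨hm, hy⟩ j hj
    obtain ⟨hj1, hjk⟩ := mem_Icc.1 hj
    have hcj : ¬ m ≤ c * j := by
      have : (j : ℝ) ≤ k + 1 := by exact_mod_cast hjk
      nlinarith
    rw [if_neg hcj, zero_add]
    rcases hjk.lt_or_eq with hjk | rfl
    · exact hy j (mem_Icc.2 ⟨hj1, by omega⟩)
    · exact Nat.lt_succ_of_le (countLE_le _ _)

end Count

section Argmax

variable {ι : Type*} [Fintype ι]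

def argmaxSet (i : ι) : Set (ι → ℝ) := {x | ∀ l, x l ≤ x i}

lemma measurableSet_argmaxSet (i : ι) : MeasurableSet (argmaxSet i) := by
  simp only [argmaxSet, Set.ofPred_forall]
  exact .iInter fun l => measurableSet_le (measurable_pi_apply l) (measurable_pi_apply i)

lemma volume_setOf_apply_eq_apply {i j : ι} (hij : i ≠ j) :
    volume {x : ι → ℝ | x i = x j} = 0 := by
  classical
  let L : (ι → ℝ) →ₗ[ℝ] ℝ := LinearMap.proj (R := ℝ) (φ := fun _ => ℝ) i - LinearMap.proj j
  have hL : {x : ι → ℝ | x i = x j} = LinearMap.ker L := by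
    ext x
    simp [L, sub_eq_zero]
  rw [hL]
  refine Measure.addHaar_submodule _ _ fun h => ?_
  have := LinearMap.congr_fun (LinearMap.ker_eq_top.1 h) (Pi.single i 1)
  simp [L, hij.symm] at this

lemma volume_eq_sum_volume_inter_argmaxSet [Nonempty ι] {s : Set (ι → ℝ)}
    (hs : MeasurableSet s) : volume s = ∑ i, volume (s ∩ argmaxSet i) := by
  have hcover : s = ⋃ i, s ∩ argmaxSet i := by
    have : ⋃ i : ι, argmaxSet i = Set.univ :=
      Set.iUnion_eq_univ_iff.2 fun x => Finite.exists_max x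
    rw [← Set.inter_iUnion, this, Set.inter_univ]
  conv_lhs => rw [hcover]
  rw [measure_iUnion₀ ?_ fun i => (hs.inter (measurableSet_argmaxSet i)).nullMeasurableSet,
    tsum_fintype]
  intro i j hij
  refine measure_mono_null (fun x ⟨⟨_, hi⟩, ⟨_, hj⟩⟩ => ?_) (volume_setOf_apply_eq_apply hij)
  exact le_antisymm (hj i) (hi j)

lemma volume_inter_argmaxSet_apply_perm {s : Set (ι → ℝ)} (hs : MeasurableSet s)
    (hperm : ∀ (σ : Equiv.Perm ι) x, x ∘ σ ∈ s ↔ x ∈ s) (σ : Equiv.Perm ι) (i : ι) :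
    volume (s ∩ argmaxSet (σ i)) = volume (s ∩ argmaxSet i) := by
  have hpre : (MeasurableEquiv.piCongrLeft (fun _ => ℝ) σ).symm ⁻¹' (s ∩ argmaxSet i) =
      s ∩ argmaxSet (σ i) := by
    ext x
    change x ∘ σ ∈ s ∩ argmaxSet i ↔ _
    exact and_congr (hperm σ x) (σ.forall_congr_right (q := fun l => x l ≤ x (σ i)))
  rw [← hpre, (volume_measurePreserving_piCongrLeft (fun _ => ℝ) σ).symm.measure_preimage
    (hs.inter (measurableSet_argmaxSet i)).nullMeasurableSet]

lemma volume_eq_card_mul_volume_inter_argmaxSet [DecidableEq ι] {s : Set (ι → ℝ)}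
    (hs : MeasurableSet s) (hperm : ∀ (σ : Equiv.Perm ι) x, x ∘ σ ∈ s ↔ x ∈ s) (i : ι) :
    volume s = Fintype.card ι * volume (s ∩ argmaxSet i) := by
  have : Nonempty ι := ⟨i⟩
  rw [volume_eq_sum_volume_inter_argmaxSet hs]
  conv_lhs =>
    enter [2, j]
    rw [← Equiv.swap_apply_right j i, volume_inter_argmaxSet_apply_perm hs hperm]
  simp

end Argmax

section Volume

variable {n : ℕ}

lemma volume_eq_lintegral_insertNth {s : Set (Fin (n + 1) → ℝ)} (hs : MeasurableSet s)
    (i : Fin (n + 1)) : volume s = ∫⁻ m, volume {y | i.insertNth m y ∈ s} := by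
  have hmp := (volume_preserving_piFinSuccAbove (fun _ => ℝ) i).symm
  rw [← hmp.measure_preimage hs.nullMeasurableSet, Measure.volume_eq_prod,
    Measure.prod_apply (hmp.measurable hs)]
  rfl

lemma insertNth_mem_argmaxSet_iff {i : Fin (n + 1)} {m : ℝ} {y : Fin n → ℝ} :
    i.insertNth m y ∈ argmaxSet i ↔ ∀ l, y l ≤ m := by
  simp [argmaxSet, Fin.forall_iff_succAbove i]

lemma setOf_insertNth_mem_Icc_inter_ballotSet_inter_argmaxSet {c : ℝ} (hc : 0 ≤ c) (T m : ℝ) :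
    {y : Fin n → ℝ | (Fin.last n).insertNth m y ∈
        Set.Icc 0 (fun _ => T) ∩ ballotSet (n + 1) c ∩ argmaxSet (Fin.last n)} =
      if m ∈ Set.Ioc ((n + 1) * c) T then Set.Icc 0 (fun _ => m) ∩ ballotSet n c else ∅ := by
  ext y
  simp only [Set.mem_ofPred_eq, Set.mem_inter_iff, Fin.insertNth_mem_Icc,
    insertNth_mem_argmaxSet_iff]
  by_cases hy : ∀ l, y l ≤ m
  · rw [insertNth_mem_ballotSet_iff hc hy]
    split_ifs with hm
    · have hm0 : 0 ≤ m := (by positivity : (0 : ℝ) ≤ (n + 1) * c).trans hm.1.le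
      simp only [Set.mem_inter_iff, Set.mem_Icc, Pi.le_def, Pi.zero_apply, Set.mem_Ioc] at hm ⊢
      grind
    · simp only [Set.mem_Icc, Pi.le_def, Pi.zero_apply, Set.mem_Ioc,
        Set.mem_empty_iff_false] at hm ⊢
      grind
  · simp only [hy, and_false, false_iff]
    split_ifs
    · exact fun h => hy h.1.2
    · exact id

lemma pow_sub_mul_pow_pred_nonneg {c m : ℝ} (hc : 0 ≤ n * c) (hm : n * c ≤ m) :
    0 ≤ m ^ n - n * c * m ^ (n - 1) := by
  cases n with
  | zero => simp
  | succ n =>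
    have : m ^ (n + 1) - (n + 1 : ℕ) * c * m ^ n = m ^ n * (m - (n + 1 : ℕ) * c) := by ring
    rw [Nat.add_sub_cancel, this]
    exact mul_nonneg (pow_nonneg (hc.trans hm) n) (by linarith)

lemma integral_pow_sub_mul_pow_pred (c a T : ℝ) :
    ∫ m in a..T, (m ^ n - n * c * m ^ (n - 1)) =
      (T ^ (n + 1) - a ^ (n + 1)) / (n + 1) - c * (T ^ n - a ^ n) := by
  have hderiv (m : ℝ) : HasDerivAt (fun m => m ^ (n + 1) / (n + 1) - c * m ^ n)
      (m ^ n - n * c * m ^ (n - 1)) m := by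
    refine (((hasDerivAt_pow (n + 1) m).div_const (n + 1 : ℝ)).sub
      ((hasDerivAt_pow n m).const_mul c)).congr_deriv ?_
    rw [Nat.add_sub_cancel]
    field_simp
    push_cast
    ring
  rw [intervalIntegral.integral_eq_sub_of_hasDerivAt (fun m _ => hderiv m)
    (by apply Continuous.intervalIntegrable; fun_prop)]
  ring

lemma mul_lintegral_Ioc_pow_sub_mul_pow_pred {c T : ℝ} (hc : 0 ≤ c) (hT : (n + 1) * c ≤ T) :
    (n + 1) * ∫⁻ m in Set.Ioc ((n + 1) * c) T, ENNReal.ofReal (m ^ n - n * c * m ^ (n - 1)) =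
      ENNReal.ofReal (T ^ (n + 1) - (n + 1) * c * T ^ n) := by
  have hnonneg : ∀ m ∈ Set.Ioc ((n + 1) * c) T, 0 ≤ m ^ n - n * c * m ^ (n - 1) :=
    fun m hm => pow_sub_mul_pow_pred_nonneg (by positivity) (by linarith [hm.1])
  rw [← ofReal_integral_eq_lintegral_ofReal, ← intervalIntegral.integral_of_le hT,
    integral_pow_sub_mul_pow_pred]
  · have hcast : ((n : ℝ≥0∞) + 1) = ENNReal.ofReal (n + 1) := by
      rw [ENNReal.ofReal_add (by positivity) zero_le_one]
      simp
    rw [hcast, ← ENNReal.ofReal_mul (by positivity)]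
    congr 1
    field_simp
    ring
  · exact (by fun_prop : Continuous fun m : ℝ => m ^ n - n * c * m ^ (n - 1)).integrableOn_Ioc
  · exact (ae_restrict_iff' measurableSet_Ioc).2 (.of_forall hnonneg)

theorem volume_Icc_inter_ballotSet (k : ℕ) {c T : ℝ} (hc : 0 ≤ c) (hT : k * c ≤ T) :
    volume (Set.Icc 0 (fun _ => T) ∩ ballotSet k c) =
      ENNReal.ofReal (T ^ k - k * c * T ^ (k - 1)) := by
  induction k generalizing T with
  | zero => simp [ballotSet, Subsingleton.eq_univ_of_nonempty, volume_pi]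
  | succ k ih =>
    have hS : MeasurableSet (Set.Icc 0 (fun _ => T) ∩ ballotSet (k + 1) c) :=
      measurableSet_Icc.inter (measurableSet_ballotSet (k + 1) c)
    have hslice (m : ℝ) : volume {y : Fin k → ℝ | (Fin.last k).insertNth m y ∈
        Set.Icc 0 (fun _ => T) ∩ ballotSet (k + 1) c ∩ argmaxSet (Fin.last k)} =
        (Set.Ioc ((k + 1) * c) T).indicator
          (fun m => ENNReal.ofReal (m ^ k - k * c * m ^ (k - 1))) m := by
      rw [setOf_insertNth_mem_Icc_inter_ballotSet_inter_argmaxSet hc]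
      split_ifs with hm
      · rw [Set.indicator_of_mem hm, ih]
        linarith [hm.1]
      · rw [Set.indicator_of_notMem hm, measure_empty]
    rw [volume_eq_card_mul_volume_inter_argmaxSet hS
        (fun σ => comp_perm_mem_Icc_inter_ballotSet σ T c) (Fin.last k),
      volume_eq_lintegral_insertNth (hS.inter (measurableSet_argmaxSet _)),
      lintegral_congr hslice, lintegral_indicator measurableSet_Ioc, Fintype.card_fin,
      Nat.cast_succ, mul_lintegral_Ioc_pow_sub_mul_pow_pred hc (by exact_mod_cast hT)]
    simp

end Volume

section EmpiricalRatio

variable {k : ℕ}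

noncomputable def empiricalRatio (x : Fin k → ℝ) (s : ℝ) : ℝ := (countLE x s : ℝ) / k / s

lemma exists_empiricalRatio_le [NeZero k] {x : Fin k → ℝ} (hx : ∀ i, 0 < x i) (s : ℝ) :
    ∃ i, empiricalRatio x s ≤ empiricalRatio x (x i) := by
  by_cases hne : ({i | x i ≤ s} : Finset (Fin k)).Nonempty
  · obtain ⟨i, hi, hmax⟩ := exists_max_image _ x hne
    have his : x i ≤ s := (mem_filter.1 hi).2
    have hcount : countLE x s ≤ countLE x (x i) :=
      card_le_card <| monotone_filter_right _ fun l _ hl => hmax l (by simpa using hl)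
    refine ⟨i, div_le_div₀ (by positivity) ?_ (hx i) his⟩
    gcongr
  · have hzero : countLE x s = 0 := card_eq_zero.2 (not_nonempty_iff_eq_empty.1 hne)
    refine ⟨0, ?_⟩
    simp only [empiricalRatio, hzero, CharP.cast_eq_zero, zero_div]
    have := hx 0
    positivity

lemma exists_isGreatest_empiricalRatio [NeZero k] {x : Fin k → ℝ}
    (hx : ∀ i, x i ∈ Set.Ioc 0 1) :
    ∃ i, IsGreatest (empiricalRatio x '' Set.Ioc 0 1) (empiricalRatio x (x i)) := by
  obtain ⟨i, hi⟩ := Finite.exists_max fun i => empiricalRatio x (x i)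
  refine ⟨i, Set.mem_image_of_mem _ (hx i), ?_⟩
  rintro _ ⟨s, -, rfl⟩
  obtain ⟨l, hl⟩ := exists_empiricalRatio_le (fun i => (hx i).1) s
  exact hl.trans (hi l)

lemma le_sSup_empiricalRatio_iff [NeZero k] {x : Fin k → ℝ} (hx : ∀ i, x i ∈ Set.Ioc 0 1)
    {lam : ℝ} (hlam : 1 ≤ lam) :
    lam ≤ sSup (empiricalRatio x '' Set.Ioc 0 1) ↔ x ∉ ballotSet k (1 / (k * lam)) := by
  obtain ⟨i, hgreat⟩ := exists_isGreatest_empiricalRatio hx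
  have hk : (0 : ℝ) < k := by exact_mod_cast Nat.pos_of_neZero k
  have hlam0 : 0 < lam := by linarith
  simp only [hgreat.csSup_eq, ballotSet, Set.mem_ofPred_eq, not_forall, not_lt, exists_prop]
  constructor
  · intro hle
    refine ⟨countLE x (x i), mem_Icc.2 ⟨card_pos.2 ⟨i, by simp⟩, countLE_le _ _⟩,
      countLE_mono _ ?_⟩
    rw [empiricalRatio, le_div_iff₀ (hx i).1, le_div_iff₀ hk] at hle
    rw [div_mul_eq_mul_div, one_mul, le_div_iff₀ (by positivity)]
    linarith
  · rintro ⟨j, hj, hjcount⟩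
    obtain ⟨hj1, hjk⟩ := mem_Icc.1 hj
    have hj0 : (0 : ℝ) < j := by exact_mod_cast hj1
    have hjk' : (j : ℝ) ≤ k := by exact_mod_cast hjk
    have hmem : 1 / (k * lam) * j ∈ Set.Ioc 0 1 := by
      refine ⟨by positivity, ?_⟩
      rw [div_mul_eq_mul_div, one_mul, div_le_one (by positivity)]
      nlinarith
    refine le_trans ?_ (hgreat.2 (Set.mem_image_of_mem _ hmem))
    rw [empiricalRatio, le_div_iff₀ hmem.1, le_div_iff₀ hk]
    have hline : lam * (1 / (k * lam) * j) * k = j := by field_simp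
    rw [hline]
    exact_mod_cast hjcount

end EmpiricalRatio

lemma map_fun_eq_volume_restrict_pi {Ω ι : Type*} [MeasurableSpace Ω] [Fintype ι] {μ : Measure Ω}
    [IsProbabilityMeasure μ] {U : ι → Ω → ℝ} (hmeas : ∀ i, Measurable (U i))
    (hindep : iIndepFun U μ) {s : Set ℝ} (hlaw : ∀ i, μ.map (U i) = volume.restrict s) :
    μ.map (fun ω i => U i ω) = volume.restrict (Set.univ.pi fun _ => s) := by
  rw [(iIndepFun_iff_map_fun_eq_pi_map fun i => (hmeas i).aemeasurable).1 hindep]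
  simp_rw [hlaw]
  rw [← Measure.restrict_pi_pi]
  rfl

/-- Daniels' identity: for `U₁, …, U_k` i.i.d. uniform on `[0,1]` and `λ ≥ 1`,
`P( sup_{0 < s ≤ 1} F̂_k(s)/s ≥ λ ) = 1/λ`, where `F̂_k` is the empirical CDF. -/
theorem daniels_identity {Ω : Type*} [MeasurableSpace Ω] (μ : Measure Ω)
    [IsProbabilityMeasure μ] (k : ℕ) (hk : 1 ≤ k) (U : Fin k → Ω → ℝ)
    (hmeas : ∀ i, Measurable (U i))
    (hindep : iIndepFun U μ)
    (hunif : ∀ i, Measure.map (U i) μ = volume.restrict (Set.Icc (0:ℝ) 1))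
    (lam : ℝ) (hlam : 1 ≤ lam) :
    μ {ω | lam ≤ sSup ((fun s : ℝ =>
        (((univ.filter fun i : Fin k => U i ω ≤ s).card : ℝ) / k) / s)
          '' Set.Ioc 0 1)} = ENNReal.ofReal (1 / lam) := by
  have : NeZero k := ⟨by omega⟩
  set X : Ω → Fin k → ℝ := fun ω i => U i ω
  have hX : Measurable X := measurable_pi_lambda _ hmeas
  have := Measure.isProbabilityMeasure_map (μ := μ) hX.aemeasurable
  have hlaw : μ.map X = volume.restrict (Set.Icc 0 (fun _ => 1)) := by
    rw [map_fun_eq_volume_restrict_pi hmeas hindep hunif, Set.pi_univ_Icc]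
    rfl
  -- At a zero coordinate the ratio is unbounded and `sSup` takes its junk value `0`, so the
  -- event is identified with the complement of the ballot set only almost surely.
  have hpos : ∀ᵐ ω ∂μ, ∀ i, X ω i ∈ Set.Ioc 0 1 := ae_all_iff.2 fun i => by
    refine ae_of_ae_map (hmeas i).aemeasurable ?_
    rw [hunif i, ← Measure.restrict_congr_set Ioc_ae_eq_Icc]
    exact ae_restrict_mem measurableSet_Ioc
  have hballot := measurableSet_ballotSet k (1 / (k * lam))
  have hline : k * (1 / (k * lam)) = 1 / lam := by field_simp
  have hlam' : 1 / lam ≤ 1 := (div_le_one (by positivity)).2 hlam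
  calc _ = μ (X ⁻¹' (ballotSet k (1 / (k * lam)))ᶜ) := measure_congr <| by
        filter_upwards [hpos] with ω hω
        exact propext (le_sSup_empiricalRatio_iff hω hlam)
    _ = ENNReal.ofReal (1 / lam) := by
      rw [← Measure.map_apply hX hballot.compl, prob_compl_eq_one_sub hballot, hlaw,
        Measure.restrict_apply hballot, Set.inter_comm,
        volume_Icc_inter_ballotSet k (by positivity) (hline ▸ hlam'), one_pow, one_pow, mul_one,
        hline, ← ENNReal.ofReal_one, ← ENNReal.ofReal_sub _ (sub_nonneg.2 hlam'), sub_sub_cancel]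
end

section
/- Let G be a CDF on ℝ with Ḡ(θ) = 1 − G(θ), and let n ≥ 2, δ ∈ (0,1]. If a random variable X is generated as X = μ + Z with μ ~ G and Z ~ N(0,1) independent, then P(X ≥ √(2δ log n)) ≥ (1/(6√(2 log n))) · exp( sup_{t ∈ [0,1]} [ log Ḡ(t√(2δ log n)) − (1−t)² δ log n ] ). -/
/-!
Split the threshold as `s = t s + (1 - t) s`. The event `{μ > t s, Z ≥ (1 - t) s}` lies in
`{μ + Z ≥ s}` and, by independence, has probability `Ḡ(t s) · P(Z ≥ (1 - t) s)`. For `a ≥ 0`,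
comparing the Gaussian density on `[a, a + 2]` with the exponential `e^{-a²/2 - (a+1)(x-a)}`,
whose integral is explicit, gives `P(Z ≥ a) ≥ e^{-a²/2} / (3(a + 1))`; for `a = (1 - t) s` we have
`3(a + 1) ≤ 6 √(2 log n)`. Optimising over `t` gives the bound.
-/

open MeasureTheory ProbabilityTheory Real Set

lemma integral_exp_neg_mul_sub {b : ℝ} (hb : b ≠ 0) (a c : ℝ) :
    ∫ x in a..c, exp (-(b * (x - a))) = (1 - exp (-(b * (c - a)))) / b := by
  rw [intervalIntegral.integral_comp_sub_right (fun x => exp (-(b * x))), sub_self,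
    intervalIntegral.integral_comp_mul_left (fun x => exp (-x)) hb, mul_zero,
    intervalIntegral.integral_comp_neg, integral_exp, neg_zero, exp_zero, smul_eq_mul,
    inv_mul_eq_div]

lemma sqrt_two_mul_pi_le : √(2 * π) ≤ 3 * (1 - exp (-2)) := by
  have he : exp (-2) ≤ 0.14 := by
    rw [exp_neg, inv_le_comm₀ (exp_pos 2) (by norm_num), show (2:ℝ) = 1 + 1 by norm_num, exp_add]
    nlinarith [exp_one_gt_d9]
  have hπ : 2 * π ≤ 2.51 ^ 2 := by nlinarith [pi_lt_d2]
  calc √(2 * π) ≤ 2.51 := sqrt_le_iff.mpr ⟨by norm_num, hπ⟩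
    _ ≤ 3 * (1 - exp (-2)) := by linarith

lemma exp_mul_exp_neg_le_exp_neg_sq_div_two {a x : ℝ} (hx : x ∈ Icc a (a + 2)) :
    exp (-a ^ 2 / 2) * exp (-((a + 1) * (x - a))) ≤ exp (-x ^ 2 / 2) := by
  rw [← exp_add, exp_le_exp]
  nlinarith [mul_nonneg (sub_nonneg.mpr hx.1) (sub_nonneg.mpr hx.2)]

theorem exp_neg_sq_div_two_div_le_gaussianReal_Ici {a : ℝ} (ha : 0 ≤ a) :
    exp (-a ^ 2 / 2) / (3 * (a + 1)) ≤ (gaussianReal 0 1).real (Ici a) := by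
  have hpdf : gaussianPDFReal 0 1 = fun x => (√(2 * π))⁻¹ * exp (-x ^ 2 / 2) := by
    ext x; simp [gaussianPDFReal]
  have hq : exp (-((a + 1) * (a + 2 - a))) ≤ exp (-2) := exp_le_exp.mpr (by nlinarith)
  calc exp (-a ^ 2 / 2) / (3 * (a + 1))
      ≤ (√(2 * π))⁻¹ * (exp (-a ^ 2 / 2) * ((1 - exp (-((a + 1) * (a + 2 - a)))) / (a + 1))) := by
        rw [inv_mul_eq_div, div_le_div_iff₀ (by positivity) (by positivity)]
        have hE : 0 < exp (-a ^ 2 / 2) := exp_pos _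
        field_simp
        nlinarith [sqrt_two_mul_pi_le]
    _ = ∫ x in a..a + 2, (√(2 * π))⁻¹ * (exp (-a ^ 2 / 2) * exp (-((a + 1) * (x - a)))) := by
        rw [intervalIntegral.integral_const_mul, intervalIntegral.integral_const_mul,
          integral_exp_neg_mul_sub (by positivity)]
    _ ≤ ∫ x in a..a + 2, gaussianPDFReal 0 1 x := by
        rw [hpdf]
        refine intervalIntegral.integral_mono_on (by linarith)
          (Continuous.intervalIntegrable (by fun_prop) _ _)
          (Continuous.intervalIntegrable (by fun_prop) _ _)
          fun x hx => ?_
        gcongr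
        exact exp_mul_exp_neg_le_exp_neg_sq_div_two hx
    _ ≤ ∫ x in Ici a, gaussianPDFReal 0 1 x := by
        rw [intervalIntegral.integral_of_le (by linarith)]
        exact setIntegral_mono_set (integrable_gaussianPDFReal 0 1).integrableOn
          (.of_forall (gaussianPDFReal_nonneg 0 1))
          (Ioc_subset_Ioi_self.trans Ioi_subset_Ici_self).eventuallyLE
    _ = (gaussianReal 0 1).real (Ici a) := by
        rw [measureReal_def, gaussianReal_apply_eq_integral 0 one_ne_zero, ENNReal.toReal_ofReal
          (setIntegral_nonneg measurableSet_Ici fun x _ => gaussianPDFReal_nonneg 0 1 x)]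

lemma measureReal_Ioi_mul_measureReal_Ici_le_prod {μ ν : Measure ℝ} [IsFiniteMeasure μ]
    [IsFiniteMeasure ν] (θ a : ℝ) :
    μ.real (Ioi θ) * ν.real (Ici a) ≤ (μ.prod ν).real {x | θ + a ≤ x.1 + x.2} := by
  rw [← measureReal_prod_prod]
  exact measureReal_mono fun x ⟨h1, h2⟩ => by
    simp only [mem_Ioi, mem_Ici, mem_ofPred_eq] at *; linarith

lemma mul_exp_sSup_image_le {ι : Type*} {S : Set ι} {f : ι → ℝ} {c P : ℝ} (hc : 0 < c)
    (hS : S.Nonempty) (h : ∀ t ∈ S, c * exp (f t) ≤ P) : c * exp (sSup (f '' S)) ≤ P := by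
  obtain ⟨t₀, ht₀⟩ := hS
  have hP : 0 < P := (mul_pos hc (exp_pos _)).trans_le (h t₀ ht₀)
  suffices sSup (f '' S) ≤ log (P / c) by
    rw [← le_div_iff₀' hc, ← exp_log (div_pos hP hc)]
    exact exp_le_exp.mpr this
  refine csSup_le ⟨f t₀, mem_image_of_mem f ht₀⟩ ?_
  rintro _ ⟨t, ht, rfl⟩
  rw [le_log_iff_exp_le (div_pos hP hc), le_div_iff₀' hc]
  exact h t ht

lemma measureReal_Ioi_mul_le_prod_gaussianReal {G : Measure ℝ} [IsFiniteMeasure G] {θ a : ℝ}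
    (ha : 0 ≤ a) :
    G.real (Ioi θ) * (exp (-a ^ 2 / 2) / (3 * (a + 1)))
      ≤ (G.prod (gaussianReal 0 1)).real {x | θ + a ≤ x.1 + x.2} :=
  (mul_le_mul_of_nonneg_left (exp_neg_sq_div_two_div_le_gaussianReal_Ici ha)
    measureReal_nonneg).trans (measureReal_Ioi_mul_measureReal_Ici_le_prod θ a)

/-- Lower bound on the non-null tail probability: if `X = μ + Z` with `μ ~ G`
and `Z ~ N(0,1)` independent, then
`P(X ≥ √(2δ log n)) ≥ (1/(6√(2 log n))) · exp( sup_{t∈[0,1]} [log Ḡ(t√(2δ log n)) − (1−t)²δ log n] )`,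
where `Ḡ(θ) = P_{μ~G}(μ > θ)` (assumed positive at the threshold so all logs are finite). -/
theorem nonnull_tail_lower_bound (G : Measure ℝ) [IsProbabilityMeasure G]
    (n : ℕ) (hn : 2 ≤ n) (δ : ℝ) (hδ1 : 0 < δ) (hδ2 : δ ≤ 1)
    (hpos : 0 < (G (Set.Ioi (Real.sqrt (2 * δ * Real.log n)))).toReal) :
    ((G.prod (gaussianReal 0 1))
        {x : ℝ × ℝ | Real.sqrt (2 * δ * Real.log n) ≤ x.1 + x.2}).toReal
      ≥ (1 / (6 * Real.sqrt (2 * Real.log n)))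
        * Real.exp (sSup ((fun t : ℝ =>
            Real.log (G (Set.Ioi (t * Real.sqrt (2 * δ * Real.log n)))).toReal
              - (1 - t) ^ 2 * δ * Real.log n) '' Set.Icc 0 1)) := by
  set s := √(2 * δ * log n)
  set L := √(2 * log n)
  have hlog : log 2 ≤ log n := log_le_log two_pos (by exact_mod_cast hn)
  have hlog_pos : 0 < log n := by linarith [log_two_gt_d9]
  have hL : 1 ≤ L := one_le_sqrt.mpr (by linarith [log_two_gt_d9])
  have hsL : s ≤ L := sqrt_le_sqrt (by nlinarith)
  have hs : 0 ≤ s := sqrt_nonneg _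
  have hs2 : s ^ 2 = 2 * δ * log n := sq_sqrt (by positivity)
  refine mul_exp_sSup_image_le (by positivity) ⟨0, left_mem_Icc.mpr zero_le_one⟩
    fun t ⟨ht0, ht1⟩ => ?_
  have hG : 0 < G.real (Ioi (t * s)) :=
    hpos.trans_le (measureReal_mono (Ioi_subset_Ioi (by nlinarith)))
  have ha : 0 ≤ (1 - t) * s := mul_nonneg (by linarith) hs
  have hexp : exp (log (G.real (Ioi (t * s))) - (1 - t) ^ 2 * δ * log n)
      = G.real (Ioi (t * s)) * exp (-((1 - t) * s) ^ 2 / 2) := by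
    rw [exp_sub, exp_log hG, mul_pow, hs2, div_eq_mul_inv, ← exp_neg]
    ring_nf
  have hsplit : t * s + (1 - t) * s = s := by ring
  calc 1 / (6 * L) * exp (log (G.real (Ioi (t * s))) - (1 - t) ^ 2 * δ * log n)
      ≤ G.real (Ioi (t * s)) * (exp (-((1 - t) * s) ^ 2 / 2) / (3 * ((1 - t) * s + 1))) := by
        rw [hexp, one_div_mul_eq_div, mul_div_assoc]
        gcongr _ * (_ / ?_)
        nlinarith
    _ ≤ _ := (measureReal_Ioi_mul_le_prod_gaussianReal ha).trans_eq (by rw [hsplit]; rfl)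
end

section
/- Let ν > 0, β ∈ (1/2, 1), r > 0, and σ_n = r√(2 log n)/n^{(1−β)/ν}. Let G be a distribution with lim_{μ→∞} μ^ν (1 − G(μ)) = C > 0. Then n^{1−β} · P_{μ ~ G(·/σ_n), Z ~ N(0,1)}(μ + Z ≥ √(2δ log n)) → C (r/√δ)^ν for every fixed δ ∈ (1−β, 1]. -/
open MeasureTheory ProbabilityTheory Filter Topology Set Real
open scoped NNReal

/-!
Conditioning on the Gaussian coordinate `z`, the probability is `∫ P(θ ≥ (t_n - z)/σ_n) dγ(z)`
with `t_n = √(2δ log n)`. For fixed `z` the threshold `(t_n - z)/σ_n` is asymptotic to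
`t_n/σ_n = (√δ/r) n^{(1-β)/ν}`, so the polynomial tail gives the pointwise limit
`C (r/√δ)^ν` of the integrand scaled by `n^{1-β}`. Dominated convergence applies: where
`z ≤ ε t_n` the tail bound keeps the scaled integrand bounded, and where `z > ε t_n` the weight
`n^{1-β} = exp (κ t_n²)`, `κ = (1-β)/(2δ)`, is at most `exp (κ z²/ε²)`; since `δ > 1-β` we have
`κ < 1/2`, so for `ε` close to `1` this is integrable against the standard Gaussian.
-/

lemma tendsto_rpow_mul_comp_of_tendsto_div {α : Type*} {l : Filter α} {g : ℝ → ℝ}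
    {a b : α → ℝ} {ν C ρ : ℝ} (hg : Tendsto (fun u => u ^ ν * g u) atTop (𝓝 C))
    (hb : Tendsto b l atTop) (hab : Tendsto (fun x => a x / b x) l (𝓝 ρ)) (hρ : 0 < ρ) :
    Tendsto (fun x => a x ^ ν * g (b x)) l (𝓝 (ρ ^ ν * C)) := by
  have hlim := ((continuousAt_rpow_const ρ ν (Or.inl hρ.ne')).tendsto.comp hab).mul
    (hg.comp hb)
  refine hlim.congr' ?_
  filter_upwards [hb.eventually_gt_atTop 0, hab.eventually (eventually_gt_nhds hρ)]
    with x hbx habx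
  have hax : a x = a x / b x * b x := (div_mul_cancel₀ _ hbx.ne').symm
  simp only [Function.comp_apply]
  rw [← mul_assoc, ← mul_rpow habx.le hbx.le, ← hax]

lemma tendsto_rpow_mul_measureReal_Ici {μ : Measure ℝ} [IsFiniteMeasure μ] {ν C : ℝ}
    (h : Tendsto (fun u => u ^ ν * μ.real (Ioi u)) atTop (𝓝 C)) :
    Tendsto (fun u => u ^ ν * μ.real (Ici u)) atTop (𝓝 C) := by
  have hsub : Tendsto (fun u : ℝ => u - 1) atTop atTop :=
    tendsto_atTop_add_const_right _ _ tendsto_id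
  have hratio : Tendsto (fun u : ℝ => u / (u - 1)) atTop (𝓝 1) := by
    have h1 : Tendsto (fun u : ℝ => 1 + (u - 1)⁻¹) atTop (𝓝 (1 + 0)) :=
      tendsto_const_nhds.add hsub.inv_tendsto_atTop
    rw [add_zero] at h1
    refine h1.congr' ?_
    filter_upwards [eventually_gt_atTop 1] with u hu
    field_simp [(sub_pos.mpr hu).ne']
    ring
  have hshift : Tendsto (fun u => u ^ ν * μ.real (Ioi (u - 1))) atTop (𝓝 C) := by
    simpa using tendsto_rpow_mul_comp_of_tendsto_div h hsub hratio one_pos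
  refine tendsto_of_tendsto_of_tendsto_of_le_of_le' h hshift ?_ ?_
  all_goals filter_upwards [eventually_ge_atTop 0] with u hu
  all_goals refine mul_le_mul_of_nonneg_left (measureReal_mono ?_) (rpow_nonneg hu ν)
  · exact Ioi_subset_Ici_self
  · exact Ici_subset_Ioi.mpr (sub_one_lt u)

lemma map_const_mul_prod_setOf_le_add {G γ : Measure ℝ} [SFinite G] [SFinite γ] {σ : ℝ}
    (hσ : 0 < σ) (t : ℝ) :
    ((G.map (σ * ·)).prod γ) {x | t ≤ x.1 + x.2} = ∫⁻ z, G (Ici ((t - z) / σ)) ∂γ := by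
  rw [Measure.prod_apply_symm (measurableSet_le measurable_const (by fun_prop))]
  refine lintegral_congr fun z => ?_
  have hslice : (·, z) ⁻¹' {x : ℝ × ℝ | t ≤ x.1 + x.2} = Ici (t - z) := by
    ext; simp
  rw [hslice, Measure.map_apply (by fun_prop) measurableSet_Ici]
  congr 1
  ext θ
  simp [div_le_iff₀ hσ, mul_comm θ]

lemma measureReal_map_const_mul_prod_setOf_le_add {G γ : Measure ℝ} [IsFiniteMeasure G]
    [SFinite γ] {σ : ℝ} (hσ : 0 < σ) (t : ℝ) :
    ((G.map (σ * ·)).prod γ).real {x | t ≤ x.1 + x.2} = ∫ z, G.real (Ici ((t - z) / σ)) ∂γ := by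
  have hmeas : Measurable fun z => G (Ici ((t - z) / σ)) :=
    (Antitone.measurable fun _ _ h => measure_mono (Ici_subset_Ici.mpr h)).comp (by fun_prop)
  rw [measureReal_def, map_const_mul_prod_setOf_le_add hσ,
    ← integral_toReal hmeas.aemeasurable (ae_of_all _ fun _ => measure_lt_top G _)]
  rfl

lemma integrable_exp_mul_sq_gaussianReal {v : ℝ≥0} (hv : v ≠ 0) {c : ℝ}
    (hc : c < (2 * (v : ℝ))⁻¹) :
    Integrable (fun z => exp (c * z ^ 2)) (gaussianReal 0 v) := by
  rw [gaussianReal_of_var_ne_zero _ hv, integrable_withDensity_iff (measurable_gaussianPDF _ _)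
    (ae_of_all _ fun _ => gaussianPDF_lt_top)]
  have heq : (fun z => exp (c * z ^ 2) * (gaussianPDF 0 v z).toReal)
      = fun z => (√(2 * π * v))⁻¹ * exp (-((2 * (v : ℝ))⁻¹ - c) * z ^ 2) := by
    funext z
    rw [toReal_gaussianPDF, gaussianPDFReal, mul_left_comm, ← exp_add]
    congr 2
    field_simp
    ring
  rw [heq]
  exact (integrable_exp_neg_mul_sq (by linarith)).const_mul _

lemma rpow_mul_le_of_le_mul {ν a m u y : ℝ} (hν : 0 ≤ ν) (ha : 0 ≤ a) (hm : 0 ≤ m) (hu : 0 ≤ u)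
    (hy : 0 ≤ y) (hau : a ≤ m * u) : a ^ ν * y ≤ m ^ ν * (u ^ ν * y) := by
  rw [← mul_assoc, ← mul_rpow hm hu]
  gcongr

lemma exp_mul_sq_le_of_mul_le {κ ε t z : ℝ} (hκ : 0 ≤ κ) (hε : 0 < ε) (ht : 0 ≤ t)
    (htz : ε * t ≤ z) : exp (κ * t ^ 2) ≤ exp (κ / ε ^ 2 * z ^ 2) := by
  have hsq : (ε * t) ^ 2 ≤ z ^ 2 := pow_le_pow_left₀ (by positivity) htz 2
  refine exp_le_exp.mpr ?_
  calc κ * t ^ 2 = κ / ε ^ 2 * (ε * t) ^ 2 := by field_simp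
    _ ≤ κ / ε ^ 2 * z ^ 2 := by gcongr

section ScaledThreshold

variable {ν C ρ κ : ℝ} {a t σ : ℕ → ℝ}

lemma eventually_pos_of_tendsto_div_atTop (ht : Tendsto t atTop atTop)
    (htσ : Tendsto (fun n => t n / σ n) atTop atTop) : ∀ᶠ n in atTop, 0 < σ n := by
  filter_upwards [ht.eventually_gt_atTop 0, htσ.eventually_gt_atTop 0] with n htn htσn
  exact (div_pos_iff_of_pos_left htn).mp htσn

lemma tendsto_rpow_mul_comp_sub_div {g : ℝ → ℝ}
    (hg : Tendsto (fun u => u ^ ν * g u) atTop (𝓝 C)) (ht : Tendsto t atTop atTop)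
    (htσ : Tendsto (fun n => t n / σ n) atTop atTop)
    (haσ : Tendsto (fun n => a n * σ n / t n) atTop (𝓝 ρ)) (hρ : 0 < ρ) (z : ℝ) :
    Tendsto (fun n => a n ^ ν * g ((t n - z) / σ n)) atTop (𝓝 (ρ ^ ν * C)) := by
  have hshrink : Tendsto (fun n => 1 - z / t n) atTop (𝓝 1) := by
    simpa using tendsto_const_nhds.sub (tendsto_const_nhds.div_atTop ht)
  have hfactor : ∀ᶠ n in atTop, (t n - z) / σ n = (1 - z / t n) * (t n / σ n) := by
    filter_upwards [ht.eventually_gt_atTop 0, eventually_pos_of_tendsto_div_atTop ht htσ]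
      with n htn hσn
    field_simp
  refine tendsto_rpow_mul_comp_of_tendsto_div hg ?_ ?_ hρ
  · exact (hshrink.pos_mul_atTop one_pos htσ).congr' (hfactor.mono fun _ h => h.symm)
  · refine (by simpa using haσ.div hshrink one_ne_zero : Tendsto _ _ (𝓝 ρ)).congr' ?_
    filter_upwards [ht.eventually_gt_atTop 0] with n htn
    simp only [Pi.div_apply]
    rw [one_sub_div htn.ne', div_div_div_cancel_right₀ htn.ne', div_div_eq_mul_div]

variable {G : Measure ℝ} [IsProbabilityMeasure G]

lemma exists_bound_rpow_mul_measureReal_Ici_sub_div (hν : 0 ≤ ν)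
    (hG : Tendsto (fun u => u ^ ν * G.real (Ici u)) atTop (𝓝 C)) (ht : Tendsto t atTop atTop)
    (htσ : Tendsto (fun n => t n / σ n) atTop atTop)
    (haσ : Tendsto (fun n => a n * σ n / t n) atTop (𝓝 ρ)) (hρ : 0 < ρ) (hκ₀ : 0 ≤ κ)
    (hκ : κ < 1 / 2) (hexp : ∀ᶠ n in atTop, a n ^ ν ≤ exp (κ * t n ^ 2)) :
    ∃ M c, c < 1 / 2 ∧ ∀ᶠ n in atTop, ∀ z,
      ‖a n ^ ν * G.real (Ici ((t n - z) / σ n))‖ ≤ M + exp (c * z ^ 2) := by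
  obtain ⟨ε, hε₀, hε₁⟩ := exists_between (show √(2 * κ) < 1 by rw [sqrt_lt' one_pos]; linarith)
  have hε : 0 < ε := (sqrt_nonneg _).trans_lt hε₀
  have hκε : 2 * κ < ε ^ 2 := (sqrt_lt' hε).mp hε₀
  have hC : 0 ≤ C := ge_of_tendsto hG <| by
    filter_upwards [eventually_ge_atTop 0] with u hu
    positivity
  obtain ⟨U, hU⟩ := eventually_atTop.mp (hG.eventually (eventually_le_nhds (lt_add_one C)))
  set m := (ρ + 1) / (1 - ε)
  have hm : 0 ≤ m := div_nonneg (by linarith) (by linarith)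
  refine ⟨m ^ ν * (C + 1), κ / ε ^ 2, by rw [div_lt_iff₀ (by positivity)]; linarith, ?_⟩
  filter_upwards [ht.eventually_gt_atTop 0, eventually_pos_of_tendsto_div_atTop ht htσ,
    (htσ.const_mul_atTop (sub_pos.mpr hε₁)).eventually_ge_atTop (max U 1),
    haσ.eventually (eventually_gt_nhds hρ), haσ.eventually (eventually_lt_nhds (lt_add_one ρ)),
    hexp] with n htn hσn hUn haσ₀ haσ₁ hexpn z
  have han : 0 < a n := pos_of_mul_pos_left (div_pos_iff_of_pos_right htn |>.mp haσ₀) hσn.le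
  rw [norm_of_nonneg (by positivity)]
  rcases le_or_gt z (ε * t n) with hz | hz
  · set u := (t n - z) / σ n
    have hu : (1 - ε) * (t n / σ n) ≤ u := by
      rw [← mul_div_assoc]
      exact div_le_div_of_nonneg_right (by linarith) hσn.le
    have hau : a n ≤ m * u := calc
      a n = a n * σ n / t n * (t n / σ n) := by field_simp
      _ ≤ (ρ + 1) * (t n / σ n) := by gcongr
      _ = m * ((1 - ε) * (t n / σ n)) := by
        rw [← mul_assoc, div_mul_cancel₀ _ (sub_pos.mpr hε₁).ne']
      _ ≤ m * u := by gcongr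
    calc a n ^ ν * G.real (Ici u)
        ≤ m ^ ν * (u ^ ν * G.real (Ici u)) := rpow_mul_le_of_le_mul hν han.le hm
          (by linarith [le_max_right U 1]) measureReal_nonneg hau
      _ ≤ m ^ ν * (C + 1) := by gcongr; exact hU u (by linarith [le_max_left U 1])
      _ ≤ m ^ ν * (C + 1) + exp (κ / ε ^ 2 * z ^ 2) := le_add_of_nonneg_right (exp_pos _).le
  · calc a n ^ ν * G.real (Ici ((t n - z) / σ n)) ≤ a n ^ ν :=
          mul_le_of_le_one_right (by positivity) measureReal_le_one
      _ ≤ exp (κ / ε ^ 2 * z ^ 2) := hexpn.trans (exp_mul_sq_le_of_mul_le hκ₀ hε htn.le hz.le)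
      _ ≤ m ^ ν * (C + 1) + exp (κ / ε ^ 2 * z ^ 2) := le_add_of_nonneg_left (by positivity)

theorem tendsto_rpow_mul_measureReal_map_const_mul_prod_gaussianReal (hν : 0 ≤ ν)
    (hG : Tendsto (fun u => u ^ ν * G.real (Ioi u)) atTop (𝓝 C)) (ht : Tendsto t atTop atTop)
    (htσ : Tendsto (fun n => t n / σ n) atTop atTop)
    (haσ : Tendsto (fun n => a n * σ n / t n) atTop (𝓝 ρ)) (hρ : 0 < ρ) (hκ₀ : 0 ≤ κ)
    (hκ : κ < 1 / 2) (hexp : ∀ᶠ n in atTop, a n ^ ν ≤ exp (κ * t n ^ 2)) :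
    Tendsto (fun n => a n ^ ν *
        ((G.map (σ n * ·)).prod (gaussianReal 0 1)).real {x | t n ≤ x.1 + x.2})
      atTop (𝓝 (ρ ^ ν * C)) := by
  have hGIci := tendsto_rpow_mul_measureReal_Ici hG
  obtain ⟨M, c, hc, hbound⟩ :=
    exists_bound_rpow_mul_measureReal_Ici_sub_div hν hGIci ht htσ haσ hρ hκ₀ hκ hexp
  have hdom : Integrable (fun z => M + exp (c * z ^ 2)) (gaussianReal 0 1) :=
    (integrable_const M).add (integrable_exp_mul_sq_gaussianReal one_ne_zero (by simpa using hc))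
  have hmeas : ∀ n, AEStronglyMeasurable (fun z => a n ^ ν * G.real (Ici ((t n - z) / σ n)))
      (gaussianReal 0 1) := fun n =>
    (((Antitone.measurable fun _ _ h => measureReal_mono (Ici_subset_Ici.mpr h)).comp
      (by fun_prop)).const_mul _).aestronglyMeasurable
  have hlim := tendsto_integral_filter_of_dominated_convergence _ (.of_forall hmeas)
    (hbound.mono fun _ hn => ae_of_all _ hn)
    hdom (ae_of_all _ (tendsto_rpow_mul_comp_sub_div hGIci ht htσ haσ hρ))
  rw [integral_const, probReal_univ, one_smul] at hlim
  refine hlim.congr' ?_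
  filter_upwards [eventually_pos_of_tendsto_div_atTop ht htσ] with n hσn
  rw [measureReal_map_const_mul_prod_setOf_le_add hσn, integral_const_mul]

end ScaledThreshold

section LogarithmicThreshold

variable {r δ p : ℝ} {σ : ℕ → ℝ}

lemma tendsto_sqrt_mul_log_natCast_atTop (hδ : 0 < δ) :
    Tendsto (fun n : ℕ => √(δ * log n)) atTop atTop :=
  tendsto_sqrt_atTop.comp ((tendsto_log_atTop.comp tendsto_natCast_atTop_atTop).const_mul_atTop hδ)

lemma eventually_sqrt_two_mul_log_pos : ∀ᶠ n : ℕ in atTop, 0 < √(2 * log n) := by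
  filter_upwards [(tendsto_log_atTop.comp tendsto_natCast_atTop_atTop).eventually_gt_atTop 0]
    with n hn
  exact sqrt_pos.mpr (by simp_all)

lemma sqrt_two_mul_mul_log (hδ : 0 ≤ δ) (x : ℝ) : √(2 * δ * log x) = √δ * √(2 * log x) := by
  rw [mul_comm 2 δ, mul_assoc, sqrt_mul hδ]

lemma tendsto_sqrt_two_mul_mul_log_div_atTop (hσ : ∀ n, σ n = r * √(2 * log n) / (n : ℝ) ^ p)
    (hr : 0 < r) (hδ : 0 < δ) (hp : 0 < p) :
    Tendsto (fun n : ℕ => √(2 * δ * log n) / σ n) atTop atTop := by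
  refine (((tendsto_rpow_atTop hp).comp tendsto_natCast_atTop_atTop).const_mul_atTop
    (div_pos (sqrt_pos.mpr hδ) hr)).congr' ?_
  filter_upwards [eventually_sqrt_two_mul_log_pos, eventually_gt_atTop 0] with n hlog hn
  have hnp : 0 < (n : ℝ) ^ p := rpow_pos_of_pos (Nat.cast_pos.mpr hn) p
  rw [hσ, sqrt_two_mul_mul_log hδ.le, Function.comp_apply]
  field_simp

lemma tendsto_rpow_mul_div_sqrt_two_mul_mul_log
    (hσ : ∀ n, σ n = r * √(2 * log n) / (n : ℝ) ^ p) (hδ : 0 < δ) :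
    Tendsto (fun n : ℕ => (n : ℝ) ^ p * σ n / √(2 * δ * log n)) atTop (𝓝 (r / √δ)) := by
  refine tendsto_const_nhds.congr' ?_
  filter_upwards [eventually_sqrt_two_mul_log_pos, eventually_gt_atTop 0] with n hlog hn
  have hnp : 0 < (n : ℝ) ^ p := rpow_pos_of_pos (Nat.cast_pos.mpr hn) p
  rw [hσ, sqrt_two_mul_mul_log hδ.le]
  field_simp [(sqrt_pos.mpr hδ).ne']

end LogarithmicThreshold

lemma rpow_eq_exp_mul_sq_sqrt_two_mul_mul_log {x δ : ℝ} (s : ℝ) (hx : 1 ≤ x) (hδ : 0 < δ) :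
    x ^ s = exp (s / (2 * δ) * √(2 * δ * log x) ^ 2) := by
  have hlog : 0 ≤ log x := log_nonneg hx
  rw [sq_sqrt (by positivity), rpow_def_of_pos (by linarith)]
  field_simp

theorem polytail_scaling_general (ν β r C : ℝ) (hν : 0 < ν) (hβ2 : β < 1)
    (hr : 0 < r)
    (G : Measure ℝ) [IsProbabilityMeasure G]
    (htail : Tendsto (fun μ : ℝ => μ ^ ν * (G (Set.Ioi μ)).toReal)
        atTop (nhds C))
    (σ : ℕ → ℝ)
    (hσ : ∀ n, σ n = r * Real.sqrt (2 * Real.log n) / (n : ℝ) ^ ((1 - β) / ν))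
    (δ : ℝ) (hδ1 : 1 - β < δ) :
    Tendsto (fun n : ℕ => (n : ℝ) ^ ((1:ℝ) - β) *
        (((Measure.map (fun θ : ℝ => σ n * θ) G).prod (gaussianReal 0 1))
          {x : ℝ × ℝ | Real.sqrt (2 * δ * Real.log n) ≤ x.1 + x.2}).toReal)
      atTop (nhds (C * (r / Real.sqrt δ) ^ ν)) := by
  have hδ : 0 < δ := by linarith
  have hpow (n : ℕ) : ((n : ℝ) ^ ((1 - β) / ν)) ^ ν = (n : ℝ) ^ (1 - β) := by
    rw [← rpow_mul n.cast_nonneg, div_mul_cancel₀ _ hν.ne']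
  have hexp : ∀ᶠ n : ℕ in atTop, ((n : ℝ) ^ ((1 - β) / ν)) ^ ν ≤
      exp ((1 - β) / (2 * δ) * √(2 * δ * log n) ^ 2) := by
    filter_upwards [eventually_ge_atTop 1] with n hn
    rw [hpow, rpow_eq_exp_mul_sq_sqrt_two_mul_mul_log _ (by exact_mod_cast hn) hδ]
  have key := tendsto_rpow_mul_measureReal_map_const_mul_prod_gaussianReal hν.le htail
    (tendsto_sqrt_mul_log_natCast_atTop (by positivity))
    (tendsto_sqrt_two_mul_mul_log_div_atTop hσ hr hδ (div_pos (by linarith) hν))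
    (tendsto_rpow_mul_div_sqrt_two_mul_mul_log hσ hδ) (div_pos hr (sqrt_pos.mpr hδ))
    (div_nonneg (by linarith) (by positivity)) (by rw [div_lt_iff₀ (by positivity)]; linarith)
    hexp
  simp only [hpow] at key
  rw [mul_comm C]
  exact key

/-- Polynomial-tail scaling: with `σ_n = r√(2 log n)/n^{(1-β)/ν}` and `G` having
polynomial tail `μ^ν (1 - G(μ)) → C > 0`, for each fixed `δ ∈ (1-β, 1]`,
`n^{1-β} · P_{μ ~ G(·/σ_n), Z ~ N(0,1)}(μ + Z ≥ √(2δ log n)) → C (r/√δ)^ν`. -/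
theorem polytail_scaling (ν β r C : ℝ) (hν : 0 < ν) (hβ1 : 1/2 < β) (hβ2 : β < 1)
    (hr : 0 < r) (hC : 0 < C)
    (G : Measure ℝ) [IsProbabilityMeasure G]
    (htail : Tendsto (fun μ : ℝ => μ ^ ν * (G (Set.Ioi μ)).toReal)
        atTop (nhds C))
    (σ : ℕ → ℝ)
    (hσ : ∀ n, σ n = r * Real.sqrt (2 * Real.log n) / (n : ℝ) ^ ((1 - β) / ν))
    (δ : ℝ) (hδ1 : 1 - β < δ) (hδ2 : δ ≤ 1) :
    Tendsto (fun n : ℕ => (n : ℝ) ^ ((1:ℝ) - β) *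
        (((Measure.map (fun θ : ℝ => σ n * θ) G).prod (gaussianReal 0 1))
          {x : ℝ × ℝ | Real.sqrt (2 * δ * Real.log n) ≤ x.1 + x.2}).toReal)
      atTop (nhds (C * (r / Real.sqrt δ) ^ ν)) :=
  polytail_scaling_general ν β r C hν hβ2 hr G htail σ hσ δ hδ1
end
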